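/- Let m₀, ω be real constants with |m₀| > |ω|, let q ≥ 4, and let M > 0. Suppose (uₙ) is a sequence in H¹(ℝᴺ) and (Φₙ) in D^{1,2}(ℝᴺ) with −ω·Φₙ(x) ≥ 0 a.e. on {uₙ ≠ 0}, such that qM + o(1)‖uₙ‖ ≥ ((q−2)/2)∫(|∇uₙ|² + (m₀²−ω²)uₙ²) dx − ω((q−4)/2)∫ Φₙ uₙ² dx. Then (uₙ) is bounded in H¹(ℝᴺ). -/
import Mathlib


open MeasureTheory Filter Real in
/-- Boundedness of the (PS) sequence in `H¹(ℝᴺ)`, case `q ≥ 4`. -/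
theorem stmt_11 (N : ℕ) (m₀ ω q M : ℝ)
    (hm : |m₀| > |ω|) (hq : 4 ≤ q) (hM : 0 < M)
    (u Φ : ℕ → EuclideanSpace ℝ (Fin N) → ℝ)
    -- each `uₙ` lies in `H¹`
    (hu2 : ∀ n, Integrable (fun x => (u n x) ^ 2))
    (hgrad2 : ∀ n, Integrable (fun x => ‖fderiv ℝ (u n) x‖ ^ 2))
    -- `−ω Φₙ ≥ 0` a.e. on `{uₙ ≠ 0}`
    (hΦ : ∀ n, ∀ᵐ x, u n x ≠ 0 → 0 ≤ -ω * Φ n x)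
    -- `o(1)` coefficient
    (ε : ℕ → ℝ) (hε : Tendsto ε atTop (nhds 0))
    (hineq : ∀ n,
      q * M + ε n * Real.sqrt (∫ x, (‖fderiv ℝ (u n) x‖ ^ 2 + (u n x) ^ 2)) ≥
        ((q - 2) / 2) *
            (∫ x, (‖fderiv ℝ (u n) x‖ ^ 2 + (m₀ ^ 2 - ω ^ 2) * (u n x) ^ 2)) -
          ω * ((q - 4) / 2) * ∫ x, Φ n x * (u n x) ^ 2) :
    ∃ C : ℝ, ∀ n,
      Real.sqrt (∫ x, (‖fderiv ℝ (u n) x‖ ^ 2 + (u n x) ^ 2)) ≤ C := by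
  have hω2 : ω ^ 2 < m₀ ^ 2 := by
    nlinarith [abs_nonneg ω, sq_abs ω, sq_abs m₀, hm]
  set c := min 1 (m₀ ^ 2 - ω ^ 2) with hcdef
  have hc : 0 < c := lt_min one_pos (by linarith)
  set C' := (q - 2) / 2 * c with hC'def
  have hC' : 0 < C' := by
    have h2 : 0 < (q - 2) / 2 := by linarith
    positivity
  set t : ℕ → ℝ :=
    fun n => Real.sqrt (∫ x, (‖fderiv ℝ (u n) x‖ ^ 2 + (u n x) ^ 2)) with htdef
  have ht0 : ∀ n, 0 ≤ t n := fun n => Real.sqrt_nonneg _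
  have htsq : ∀ n, t n ^ 2 = ∫ x, (‖fderiv ℝ (u n) x‖ ^ 2 + (u n x) ^ 2) := by
    intro n
    apply Real.sq_sqrt
    apply integral_nonneg
    intro x; positivity
  have hInt : ∀ n, Integrable (fun x => ‖fderiv ℝ (u n) x‖ ^ 2 + (u n x) ^ 2) :=
    fun n => (hgrad2 n).add (hu2 n)
  have key : ∀ n, C' * t n ^ 2 ≤ q * M + ε n * t n := by
    intro n
    have h1 : 0 ≤ ∫ x, -ω * (Φ n x * (u n x) ^ 2) := by
      apply integral_nonneg_of_ae
      filter_upwards [hΦ n] with x hx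
      by_cases h : u n x = 0
      · simp [h]
      · have h2 := hx h
        show (0:ℝ) ≤ -ω * (Φ n x * u n x ^ 2)
        nlinarith [sq_nonneg (u n x)]
    rw [integral_const_mul] at h1
    have hq4 : (0:ℝ) ≤ (q - 4) / 2 := by linarith
    have hΦterm : 0 ≤ -(ω * ((q - 4) / 2) * ∫ x, Φ n x * (u n x) ^ 2) := by
      have := mul_nonneg hq4 h1
      nlinarith [this]
    have hmono : c * ∫ x, (‖fderiv ℝ (u n) x‖ ^ 2 + (u n x) ^ 2) ≤
        ∫ x, (‖fderiv ℝ (u n) x‖ ^ 2 + (m₀ ^ 2 - ω ^ 2) * (u n x) ^ 2) := by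
      rw [← integral_const_mul]
      apply integral_mono ((hInt n).const_mul c)
        ((hgrad2 n).add ((hu2 n).const_mul _))
      intro x
      have h1' : c ≤ 1 := min_le_left _ _
      have h2' : c ≤ m₀ ^ 2 - ω ^ 2 := min_le_right _ _
      simp only [Pi.add_apply]
      nlinarith [sq_nonneg (u n x), sq_nonneg ‖fderiv ℝ (u n) x‖]
    have h3 : C' * t n ^ 2 ≤
        (q - 2) / 2 * ∫ x, (‖fderiv ℝ (u n) x‖ ^ 2 + (m₀ ^ 2 - ω ^ 2) * (u n x) ^ 2) := by
      rw [hC'def, htsq n, mul_assoc]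
      have hq2 : (0:ℝ) ≤ (q - 2) / 2 := by linarith
      exact mul_le_mul_of_nonneg_left hmono hq2
    have hin := hineq n
    have hts : t n = Real.sqrt (∫ x, (‖fderiv ℝ (u n) x‖ ^ 2 + (u n x) ^ 2)) := rfl
    rw [← hts] at hin
    linarith
  obtain ⟨n₀, hn₀⟩ := Metric.tendsto_atTop.mp hε 1 one_pos
  set B := max 1 ((q * M + 1) / C') with hBdef
  refine ⟨B + ∑ i ∈ Finset.range n₀, t i, fun n => ?_⟩
  show t n ≤ _
  have hsum : 0 ≤ ∑ i ∈ Finset.range n₀, t i :=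
    Finset.sum_nonneg fun i _ => ht0 i
  have hB1 : (1:ℝ) ≤ B := le_max_left _ _
  by_cases hn : n < n₀
  · have hle : t n ≤ ∑ i ∈ Finset.range n₀, t i :=
      Finset.single_le_sum (fun i _ => ht0 i) (Finset.mem_range.mpr hn)
    linarith
  · push_neg at hn
    have hε1 : |ε n| ≤ 1 := by
      have h := hn₀ n hn
      rw [Real.dist_eq, sub_zero] at h
      linarith
    have hk := key n
    have htB : t n ≤ B := by
      by_contra h
      push_neg at h
      have h1 : 1 < t n := lt_of_le_of_lt hB1 h
      have h2 : (q * M + 1) / C' < t n := lt_of_le_of_lt (le_max_right _ _) h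
      have h3 : q * M + 1 < C' * t n := by
        rw [div_lt_iff₀ hC'] at h2; linarith
      have hεt : ε n * t n ≤ t n := by
        have hε2 : ε n ≤ 1 := (abs_le.mp hε1).2
        nlinarith [ht0 n]
      have h4 : (q * M + 1) * t n < C' * t n * t n :=
        mul_lt_mul_of_pos_right h3 (by linarith)
      have hqM : 0 < q * M := mul_pos (by linarith) hM
      have h5 : q * M * 1 < q * M * t n := by
        exact mul_lt_mul_of_pos_left h1 hqM
      nlinarith [hk, hεt, h4, h5]
    linarith
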